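/- arXiv:math/0611453 — 7 statements merged into one kernel-verified Lean document; each statement's English description precedes it below -/
import Mathlib

section
/- Let Γ be a group acting on a set Z, G₁ and G₂ subgroups of Γ, and J a subgroup of G₁ ∩ G₂. Suppose (X₁, X₂) is a proper interactive pair for (G₁, G₂, J). Then for every (m,k)-form of length n > 1 with value g = γ_n⋯γ_1, the inclusion g • X_k ⊆ X_{3−m} is strict, i.e. g • X_k is a proper subset of X_{3−m}. -/
/-!
Along an `(m, k)`-form `γ_n ⋯ γ_1` the sets are pushed `X_k → X_{3-k} → ⋯ → X_{3-m}`, one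
letter at a time, so `g • X_k ⊆ X_{3-m}`; if this is an equality then, by the sandwich
`X_{3-m} = γ_n • (γ_{n-1} ⋯ γ_1 • X_k) ⊆ γ_n • X_m ⊆ X_{3-m}`, both `γ_n` and `γ_{n-1}` map
their source set onto their target. As `n > 1` these two letters come from different factors,
and one of them contradicts properness. Properness also shows that no letter lies in both
`G₁ ∖ J` and `G₂ ∖ J`, which is what makes the factor of each letter well defined.
-/

open Pointwise

/-- `x` is a letter of factor `m`: it belongs to `G m` but not to `J`. -/
def NFLetter {Γ : Type*} [Group Γ] (G : Bool → Subgroup Γ) (J : Subgroup Γ)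
    (m : Bool) (x : Γ) : Prop :=
  x ∈ G m ∧ x ∉ J

/-- A normal form for `(G true, G false, J)`: a nonempty list of letters, written from the
last letter `γ_n` down to the first letter `γ_1`, each lying in `(G₁ ∖ J) ∪ (G₂ ∖ J)`,
such that consecutive letters lie in different factors. -/
def IsNormalForm {Γ : Type*} [Group Γ] (G : Bool → Subgroup Γ) (J : Subgroup Γ)
    (w : List Γ) : Prop :=
  w ≠ [] ∧ (∀ x ∈ w, NFLetter G J true x ∨ NFLetter G J false x) ∧
    w.Chain' (fun a b => ∀ m, NFLetter G J m b → NFLetter G J (!m) a)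

/-- An `(m, k)`-form: a normal form whose last letter `γ_n` (head of the list) lies in
`G m ∖ J` and whose first letter `γ_1` (last entry of the list) lies in `G k ∖ J`. -/
def IsMKForm {Γ : Type*} [Group Γ] (G : Bool → Subgroup Γ) (J : Subgroup Γ)
    (m k : Bool) (w : List Γ) : Prop :=
  IsNormalForm G J w ∧
    ∃ h : w ≠ [], NFLetter G J m (w.head h) ∧ NFLetter G J k (w.getLast h)

/-- `(X true, X false)` is an interactive pair for `(G true, G false, J)`. -/
def IsInteractivePair {Γ : Type*} [Group Γ] {Z : Type*} [MulAction Γ Z]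
    (G : Bool → Subgroup Γ) (J : Subgroup Γ) (X : Bool → Set Z) : Prop :=
  (∀ m, (X m).Nonempty) ∧ Disjoint (X true) (X false) ∧
    (∀ m, ∀ j ∈ J, j • X m = X m) ∧
    (∀ m, ∀ g : Γ, NFLetter G J m g → g • X m ⊆ X (!m))

/-- The interactive pair `(X true, X false)` is proper: some point of one of the sets is not
contained in any translate of the other set by the corresponding group. -/
def IsProperInteractivePair {Γ : Type*} [Group Γ] {Z : Type*} [MulAction Γ Z]
    (G : Bool → Subgroup Γ) (J : Subgroup Γ) (X : Bool → Set Z) : Prop :=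
  IsInteractivePair G J X ∧
    ∃ m, ∃ x ∈ X m, ∀ g ∈ G (!m), x ∉ g • X (!m)

section

variable {Γ : Type*} [Group Γ] {Z : Type*} [MulAction Γ Z]
  {G : Bool → Subgroup Γ} {J : Subgroup Γ} {X : Bool → Set Z}

namespace IsProperInteractivePair

variable (hX : IsProperInteractivePair G J X)
include hX

theorem smul_subset {m : Bool} {g : Γ} (hg : NFLetter G J m g) : g • X m ⊆ X (!m) :=
  hX.1.2.2.2 m g hg

theorem nfLetter_unique {t : Γ} {p q : Bool} (hp : NFLetter G J p t) (hq : NFLetter G J q t) :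
    p = q := by
  by_contra hne
  obtain ⟨m₀, x, hx, hxout⟩ := hX.2
  have hletter : NFLetter G J m₀ t ∧ t ∈ G (!m₀) := by
    cases p <;> cases q <;> cases m₀ <;> simp_all [NFLetter]
  have htx : t • x ∈ X (!m₀) := hX.smul_subset hletter.1 (Set.smul_mem_smul_set hx)
  exact hxout t⁻¹ (inv_mem hletter.2) (Set.mem_smul_set_iff_inv_smul_mem.2 (by simpa using htx))

theorem exists_forall_nfLetter_smul_ne : ∃ p, ∀ γ, NFLetter G J p γ → γ • X p ≠ X (!p) := by
  obtain ⟨m₀, x, hx, hxout⟩ := hX.2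
  refine ⟨!m₀, fun γ hγ hγX => hxout γ hγ.1 ?_⟩
  rwa [hγX, Bool.not_not]

end IsProperInteractivePair

namespace IsMKForm

variable (hX : IsProperInteractivePair G J X)
include hX

theorem of_singleton {m k : Bool} {a : Γ} (h : IsMKForm G J m k [a]) :
    NFLetter G J m a ∧ m = k := by
  obtain ⟨-, _, hhead, hlast⟩ := h
  exact ⟨hhead, hX.nfLetter_unique hhead hlast⟩

theorem of_cons_cons {m k : Bool} {a b : Γ} {t : List Γ} (h : IsMKForm G J m k (a :: b :: t)) :
    NFLetter G J m a ∧ NFLetter G J (!m) b ∧ IsMKForm G J (!m) k (b :: t) := by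
  obtain ⟨⟨-, hletters, hchain⟩, _, hhead, hlast⟩ := h
  rw [List.Chain', List.isChain_cons_cons] at hchain
  obtain ⟨q, hq⟩ : ∃ q, NFLetter G J q b :=
    (hletters b (by simp)).elim (⟨true, ·⟩) (⟨false, ·⟩)
  have hb : NFLetter G J (!m) b := by
    rwa [← hX.nfLetter_unique (hchain.1 q hq) hhead, Bool.not_not]
  refine ⟨hhead, hb, ⟨List.cons_ne_nil _ _, fun x hx => hletters x (List.mem_cons_of_mem _ hx),
    hchain.2⟩, List.cons_ne_nil _ _, hb, ?_⟩
  rwa [List.getLast_cons (List.cons_ne_nil _ _)] at hlast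

theorem prod_smul_subset : ∀ {m k : Bool} {w : List Γ}, IsMKForm G J m k w →
    w.prod • X k ⊆ X (!m)
  | _, _, [], h => absurd rfl h.1.1
  | _, _, [a], h => by
    obtain ⟨ha, rfl⟩ := of_singleton hX h
    simpa using hX.smul_subset ha
  | m, k, a :: b :: t, h => by
    obtain ⟨ha, -, htail⟩ := of_cons_cons hX h
    rw [List.prod_cons, mul_smul]
    calc a • (b :: t).prod • X k ⊆ a • X m := by
          simpa using Set.smul_set_mono (a := a) (prod_smul_subset htail)
      _ ⊆ X (!m) := hX.smul_subset ha

theorem smul_eq_of_prod_smul_eq {m k : Bool} {a b : Γ} {t : List Γ}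
    (h : IsMKForm G J m k (a :: b :: t)) (heq : (a :: b :: t).prod • X k = X (!m)) :
    a • X m = X (!m) ∧ (b :: t).prod • X k = X m := by
  obtain ⟨ha, -, htail⟩ := of_cons_cons hX h
  have htail_sub : (b :: t).prod • X k ⊆ X m := by simpa using prod_smul_subset hX htail
  rw [List.prod_cons, mul_smul] at heq
  have ha_eq : a • X m = X (!m) :=
    (hX.smul_subset ha).antisymm (heq ▸ Set.smul_set_mono htail_sub)
  exact ⟨ha_eq, (smul_left_cancel_iff a).1 (heq.trans ha_eq.symm)⟩

theorem head_smul_eq_of_prod_smul_eq {m k : Bool} {a : Γ} {l : List Γ}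
    (h : IsMKForm G J m k (a :: l)) (heq : (a :: l).prod • X k = X (!m)) :
    a • X m = X (!m) := by
  cases l with
  | nil =>
    obtain ⟨-, rfl⟩ := of_singleton hX h
    simpa using heq
  | cons b t => exact (smul_eq_of_prod_smul_eq hX h heq).1

end IsMKForm

end

theorem stmt2_general {Γ : Type*} [Group Γ] {Z : Type*} [MulAction Γ Z]
    (G : Bool → Subgroup Γ) (J : Subgroup Γ)
    (X : Bool → Set Z) (hX : IsProperInteractivePair G J X) :
    ∀ (m k : Bool) (w : List Γ), IsMKForm G J m k w → 1 < w.length →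
      w.prod • X k ⊂ X (!m) := by
  intro m k w hw hlen
  refine ⟨hw.prod_smul_subset hX, fun hsup => ?_⟩
  obtain _ | ⟨a, _ | ⟨b, t⟩⟩ := w
  · simp at hlen
  · simp at hlen
  obtain ⟨ha_letter, hb_letter, htail⟩ := hw.of_cons_cons hX
  obtain ⟨ha, htail_eq⟩ :=
    hw.smul_eq_of_prod_smul_eq hX ((hw.prod_smul_subset hX).antisymm hsup)
  have hb : b • X (!m) = X m := by
    simpa using htail.head_smul_eq_of_prod_smul_eq hX (by simpa using htail_eq)
  obtain ⟨p, hp⟩ := hX.exists_forall_nfLetter_smul_ne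
  rcases Bool.eq_or_eq_not p m with rfl | rfl
  · exact hp a ha_letter ha
  · exact hp b hb_letter (by simpa using hb)

theorem stmt2 {Γ : Type*} [Group Γ] {Z : Type*} [MulAction Γ Z]
    (G : Bool → Subgroup Γ) (J : Subgroup Γ) (hJ : ∀ m, J ≤ G m)
    (X : Bool → Set Z) (hX : IsProperInteractivePair G J X) :
    ∀ (m k : Bool) (w : List Γ), IsMKForm G J m k w → 1 < w.length →
      w.prod • X k ⊂ X (!m) :=
  stmt2_general G J X hX
end

section
/- Let Γ be a group acting on a set Z, G₁ and G₂ subgroups of Γ, and J a subgroup of G₁ ∩ G₂. If there exists a proper interactive pair (X₁, X₂) for (G₁, G₂, J), then the canonical homomorphism Φ : G₁ *_J G₂ → Γ induced by the inclusions of G₁ and G₂ into Γ is injective; equivalently, the value γ_n⋯γ_1 of every normal form is not the identity of Γ, so the subgroup generated by G₁ and G₂ is isomorphic to the amalgamated free product G₁ *_J G₂. -/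
open Pointwise

/-- The canonical homomorphism from the amalgamated free product `G₁ *_J G₂` to `Γ`
induced by the inclusion homomorphisms of `G₁` and `G₂` into `Γ`. -/
noncomputable def amalgHom {Γ : Type*} [Group Γ] (G : Bool → Subgroup Γ) (J : Subgroup Γ)
    (hJ : ∀ m, J ≤ G m) :
    Monoid.PushoutI (fun m => Subgroup.inclusion (hJ m)) →* Γ :=
  Monoid.PushoutI.lift (fun m => (G m).subtype) J.subtype
    (fun m => by ext x; rfl)

/-!
Ping-pong: if the last letter `γ_1` of a normal form lies in `G m` and its first letter `γ_n` in
`G k`, its value maps `X m` into `X (!k)`. Let `x ∈ X m₀` be the point given by properness and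
suppose the value is `1`.
* If `γ_1 ∈ G m₀` and `n ≥ 2`, then `x = γ_n • y` with `y = γ_{n-1} ⋯ γ_1 • x`; whichever factor
  `γ_n` lies in, this puts `x` into `γ • X (!m₀)` for `γ = γ_n` or `γ = 1` in `G (!m₀)`.
* If `γ_1, γ_n ∈ G (!m₀)`, then `1` maps `X (!m₀)` into the disjoint set `X m₀`.
* Otherwise the inverse normal form `γ_1⁻¹ ⋯ γ_n⁻¹` ends in `G m₀`.

Properness also gives `G true ⊓ G false ≤ J`, so every letter has a unique factor. A reduced word
of the amalgamated product, with its base element absorbed into the first letter, then maps to a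
normal form, and injectivity follows.
-/

abbrev NFAlternates {Γ : Type*} [Group Γ] (G : Bool → Subgroup Γ) (J : Subgroup Γ)
    (a b : Γ) : Prop :=
  ∀ m, NFLetter G J m b → NFLetter G J (!m) a

section Letters

variable {Γ : Type*} [Group Γ] {G : Bool → Subgroup Γ} {J : Subgroup Γ} {m m' : Bool} {x : Γ}

@[simp]
lemma nfLetter_inv_iff : NFLetter G J m x⁻¹ ↔ NFLetter G J m x := by
  simp [NFLetter]

lemma NFLetter.mul_left {j : Γ} (hj : j ∈ J) (hJ : J ≤ G m) (hx : NFLetter G J m x) :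
    NFLetter G J m (j * x) :=
  ⟨mul_mem (hJ hj) hx.1, fun hjx => hx.2 (by simpa using mul_mem (inv_mem hj) hjx)⟩

lemma NFLetter.factor_eq (hGJ : G true ⊓ G false ≤ J) (h : NFLetter G J m x)
    (h' : NFLetter G J m' x) : m = m' := by
  by_contra hne
  obtain rfl : m' = !m := by cases m <;> cases m' <;> simp_all
  exact h.2 (hGJ (by cases m <;> exact ⟨by simp_all [NFLetter], by simp_all [NFLetter]⟩))

lemma NFAlternates.inv_swap (hGJ : G true ⊓ G false ≤ J) {a b : Γ} {k : Bool}
    (hb : NFLetter G J k b) (hab : NFAlternates G J a b) : NFAlternates G J b⁻¹ a⁻¹ := by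
  intro m ha
  obtain rfl : m = !k := (nfLetter_inv_iff.mp ha).factor_eq hGJ (hab k hb)
  simpa using hb

lemma IsNormalForm.reverse_inv (hGJ : G true ⊓ G false ≤ J) {w : List Γ}
    (hw : IsNormalForm G J w) : IsNormalForm G J (w.map (·⁻¹)).reverse := by
  obtain ⟨hne, hletters, hchain⟩ := hw
  refine ⟨by simpa using hne, fun x hx => by simpa using hletters x⁻¹ (by simpa using hx),
    ?_⟩
  rw [List.Chain', List.isChain_reverse, List.isChain_map]
  refine List.IsChain.imp_of_mem_imp (fun a b _ hb hab => ?_) hchain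
  rcases hletters b hb with hb | hb <;> exact NFAlternates.inv_swap hGJ hb hab

lemma IsNormalForm.mul_head (hJ : ∀ m, J ≤ G m) {j a : Γ} (hj : j ∈ J) {t : List Γ}
    (hw : IsNormalForm G J (a :: t)) : IsNormalForm G J (j * a :: t) := by
  obtain ⟨-, hletters, hchain⟩ := hw
  refine ⟨List.cons_ne_nil _ _, ?_, ?_⟩
  · simp only [List.mem_cons, forall_eq_or_imp] at hletters ⊢
    exact ⟨hletters.1.imp (·.mul_left hj (hJ _)) (·.mul_left hj (hJ _)), hletters.2⟩
  · exact List.IsChain.imp_head (fun hab m hm => (hab m hm).mul_left hj (hJ _)) hchain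

end Letters

section PingPong

variable {Γ : Type*} [Group Γ] {Z : Type*} [MulAction Γ Z] {G : Bool → Subgroup Γ}
  {J : Subgroup Γ} {X : Bool → Set Z}

theorem IsInteractivePair.exists_prod_smul_subset (hX : IsInteractivePair G J X) {m : Bool} :
    ∀ {a : Γ} {t : List Γ}, (a :: t).IsChain (NFAlternates G J) →
      NFLetter G J m ((a :: t).getLast (List.cons_ne_nil a t)) →
      ∃ k, NFLetter G J k a ∧ (a :: t).prod • X m ⊆ X (!k)
  | a, [], _, ha => ⟨m, ha, by simpa using hX.2.2.2 m a ha⟩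
  | a, b :: t, hchain, hlast => by
    rw [List.isChain_cons_cons] at hchain
    obtain ⟨k, hb, hsub⟩ := hX.exists_prod_smul_subset hchain.2 hlast
    refine ⟨!k, hchain.1 k hb, ?_⟩
    rw [List.prod_cons, mul_smul]
    exact (Set.smul_set_mono hsub).trans (by simpa using hX.2.2.2 (!k) a (hchain.1 k hb))

theorem IsInteractivePair.prod_ne_one_of_getLast (hX : IsInteractivePair G J X) {m₀ : Bool}
    {x : Z} (hx : x ∈ X m₀) (hproper : ∀ g ∈ G (!m₀), x ∉ g • X (!m₀)) {w : List Γ}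
    (hne : w ≠ []) (hchain : w.IsChain (NFAlternates G J))
    (hlast : NFLetter G J m₀ (w.getLast hne)) : w.prod ≠ 1 := by
  obtain ⟨a, t, rfl⟩ := List.exists_cons_of_ne_nil hne
  have hx' : x ∉ X (!m₀) := by simpa using hproper 1 (one_mem _)
  intro hprod
  cases t with
  | nil =>
    rw [List.prod_singleton] at hprod
    exact hlast.2 (by simp [hprod])
  | cons b s =>
    rw [List.isChain_cons_cons] at hchain
    obtain ⟨k, hb, hsub⟩ := hX.exists_prod_smul_subset hchain.2 hlast
    have ha : NFLetter G J (!k) a := hchain.1 k hb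
    have hy : (b :: s).prod • x ∈ X (!k) := hsub (Set.smul_mem_smul_set hx)
    have hxy : a • (b :: s).prod • x = x := by
      rw [smul_smul, ← List.prod_cons, hprod, one_smul]
    rcases Bool.eq_or_eq_not k m₀ with rfl | rfl
    · exact hproper a ha.1 (hxy ▸ Set.smul_mem_smul_set hy)
    · rw [Bool.not_not] at ha hy
      exact hx' (hxy ▸ hX.2.2.2 m₀ a ha (Set.smul_mem_smul_set hy))

theorem IsInteractivePair.disjoint (hX : IsInteractivePair G J X) (m : Bool) :
    Disjoint (X m) (X (!m)) := by
  cases m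
  exacts [hX.2.1.symm, hX.2.1]

theorem IsProperInteractivePair.inf_le (hX : IsProperInteractivePair G J X) :
    G true ⊓ G false ≤ J := by
  rintro g ⟨hg₁, hg₂⟩
  by_contra hgJ
  obtain ⟨hpair, m₀, x, hx, hproper⟩ := hX
  have hg : ∀ m, g ∈ G m := Bool.forall_bool.mpr ⟨hg₂, hg₁⟩
  have hletter : NFLetter G J m₀ g⁻¹ := nfLetter_inv_iff.mpr ⟨hg m₀, hgJ⟩
  exact hproper g (hg _) (Set.mem_smul_set_iff_inv_smul_mem.mpr
    (hpair.2.2.2 m₀ g⁻¹ hletter (Set.smul_mem_smul_set hx)))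

theorem IsProperInteractivePair.prod_ne_one (hX : IsProperInteractivePair G J X) {w : List Γ}
    (hw : IsNormalForm G J w) : w.prod ≠ 1 := by
  obtain ⟨hpair, m₀, x, hx, hproper⟩ := id hX
  obtain ⟨a, t, rfl⟩ := List.exists_cons_of_ne_nil hw.1
  obtain ⟨m, hm⟩ : ∃ m, NFLetter G J m ((a :: t).getLast hw.1) := by
    rcases hw.2.1 _ (List.getLast_mem hw.1) with h | h
    exacts [⟨true, h⟩, ⟨false, h⟩]
  intro hprod
  rcases Bool.eq_or_eq_not m m₀ with rfl | rfl
  · exact hpair.prod_ne_one_of_getLast hx hproper hw.1 hw.2.2 hm hprod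
  obtain ⟨k, ha, hsub⟩ := hpair.exists_prod_smul_subset hw.2.2 hm
  rw [hprod, one_smul] at hsub
  rcases Bool.eq_or_eq_not k m₀ with rfl | rfl
  · have hw' := hw.reverse_inv hX.inf_le
    refine hpair.prod_ne_one_of_getLast hx hproper hw'.1 hw'.2.2 (by simpa using ha) ?_
    rw [← List.prod_inv_reverse, hprod, inv_one]
  · obtain ⟨y, hy⟩ := hpair.1 (!m₀)
    exact (hpair.disjoint m₀).ne_of_mem (by simpa using hsub hy) hy rfl

end PingPong

namespace Monoid.PushoutI

variable {ι : Type*} {G : ι → Type*} {H K : Type*}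

theorem lift_ofCoprodI_prod [∀ i, Monoid (G i)] [Monoid H] [Monoid K] {φ : ∀ i, H →* G i}
    (f : ∀ i, G i →* K) (k : H →* K) (hf : ∀ i, (f i).comp (φ i) = k)
    (w : CoprodI.Word G) :
    lift f k hf (ofCoprodI w.prod) = (w.toList.map fun l => f l.1 l.2).prod := by
  simp [CoprodI.Word.prod, map_list_prod, Function.comp_def]

theorem exists_base_mul_ofCoprodI_eq [∀ i, Group (G i)] [Group H] {φ : ∀ i, H →* G i}
    (hφ : ∀ i, Function.Injective (φ i)) (u : PushoutI φ) :
    ∃ (h : H) (w : CoprodI.Word G), Reduced φ w ∧ base φ h * ofCoprodI w.prod = u := by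
  classical
  obtain ⟨d⟩ := NormalWord.transversal_nonempty φ hφ
  let w : NormalWord d := NormalWord.equiv u
  refine ⟨w.head, w.toWord, ?_, NormalWord.equiv.symm_apply_apply u⟩
  rintro ⟨i, g⟩ hmem hrange
  have hset : g ∈ d.set i := w.normalized i g hmem
  have hsnd := (d.compl i).equiv_snd_eq_self_of_mem_of_one_mem (one_mem _) hset
  rw [(d.compl i).equiv_snd_eq_one_of_mem_of_one_mem (d.one_mem i) hrange] at hsnd
  exact w.ne_one _ hmem (congrArg Subtype.val hsnd).symm

end Monoid.PushoutI

section Amalgam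

variable {Γ : Type*} [Group Γ] {G : Bool → Subgroup Γ} {J : Subgroup Γ}
  (hJ : ∀ m, J ≤ G m)

lemma isNormalForm_of_reduced (hGJ : G true ⊓ G false ≤ J)
    {w : Monoid.CoprodI.Word fun m => G m}
    (hw : Monoid.PushoutI.Reduced (fun m => Subgroup.inclusion (hJ m)) w) (hne : w.toList ≠ []) :
    IsNormalForm G J (w.toList.map fun l => (l.2 : Γ)) := by
  have hletter : ∀ l ∈ w.toList, NFLetter G J l.1 l.2 :=
    fun l hl => ⟨l.2.2, fun hJl => hw l hl ⟨⟨l.2, hJl⟩, rfl⟩⟩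
  refine ⟨by simpa using hne, ?_, ?_⟩
  · simp only [List.mem_map]
    rintro _ ⟨⟨_ | _, g⟩, hl, rfl⟩
    exacts [Or.inr (hletter _ hl), Or.inl (hletter _ hl)]
  · rw [List.Chain', List.isChain_map]
    refine w.chain_ne.imp_of_mem_imp fun l l' hl hl' hne' m hm => ?_
    obtain rfl := hm.factor_eq hGJ (hletter l' hl')
    exact Bool.eq_not.mpr hne' ▸ hletter l hl

theorem amalgHom_injective (hGJ : G true ⊓ G false ≤ J)
    (hnf : ∀ w, IsNormalForm G J w → w.prod ≠ 1) : Function.Injective (amalgHom G J hJ) := by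
  rw [injective_iff_map_eq_one]
  intro u hu
  obtain ⟨h, w, hw, rfl⟩ := Monoid.PushoutI.exists_base_mul_ofCoprodI_eq
    (fun m => Subgroup.inclusion_injective (hJ m)) u
  rw [map_mul, amalgHom, Monoid.PushoutI.lift_base, Monoid.PushoutI.lift_ofCoprodI_prod] at hu
  have hnw := isNormalForm_of_reduced hJ hGJ hw
  cases hL : w.toList with
  | nil =>
    simp_all [Monoid.CoprodI.Word.prod]
  | cons l ls =>
    rw [hL] at hnw
    refine absurd ?_ (hnf _ ((hnw (List.cons_ne_nil _ _)).mul_head hJ h.2))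
    simpa [hL, mul_assoc] using hu

end Amalgam

theorem stmt3 {Γ : Type*} [Group Γ] {Z : Type*} [MulAction Γ Z]
    (G : Bool → Subgroup Γ) (J : Subgroup Γ) (hJ : ∀ m, J ≤ G m)
    (X : Bool → Set Z) (hX : IsProperInteractivePair G J X) :
    Function.Injective (amalgHom G J hJ) ∧
      ∀ w : List Γ, IsNormalForm G J w → w.prod ≠ 1 :=
  ⟨amalgHom_injective hJ hX.inf_le fun _ => hX.prod_ne_one, fun _ => hX.prod_ne_one⟩
end

section
/- Let Z be a topological space, Γ a group acting on Z such that each element of Γ acts as a homeomorphism of Z, G₁ and G₂ subgroups of Γ, and J a subgroup of G₁ ∩ G₂. Let X₁ and X₂ be disjoint nonempty open subsets of Z such that the set S := Z ∖ (X₁ ∪ X₂) equals the topological frontier of X₁ and also equals the topological frontier of X₂. If for each m ∈ {1,2} the set X_m is precisely invariant under J in G_m, then g • X₁ ⊆ X₂ for every g ∈ G₁∖J and g • X₂ ⊆ X₁ for every g ∈ G₂∖J; in particular, (X₁, X₂) is an interactive pair for (G₁, G₂, J). -/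
/-! For `g ∈ G m ∖ J`, the set `g • X m` is open and misses `X m`, hence misses its closure, which
contains `S = (X true ∪ X false)ᶜ`; so `g • X m` can only lie in `X (!m)`. -/

open Pointwise

theorem Bool.union_apply_not {α : Type*} (s : Bool → Set α) (m : Bool) :
    s m ∪ s (!m) = s true ∪ s false := by
  cases m
  · exact Set.union_comm _ _
  · rfl

theorem IsOpen.subset_of_disjoint_of_compl_union_subset_closure {Z : Type*} [TopologicalSpace Z]
    {U V W : Set Z} (hW : IsOpen W) (hWU : Disjoint W U) (h : (U ∪ V)ᶜ ⊆ closure U) :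
    W ⊆ V := by
  intro z hz
  by_contra hzV
  have hzU : z ∉ U := hWU.notMem_of_mem_left hz
  exact (hWU.symm.closure_left hW).notMem_of_mem_left (h (by simp [hzU, hzV])) hz

theorem stmt5_general {Γ : Type*} [Group Γ] {Z : Type*} [TopologicalSpace Z] [MulAction Γ Z]
    [ContinuousConstSMul Γ Z]
    (G : Bool → Subgroup Γ) (J : Subgroup Γ)
    (X : Bool → Set Z)
    (hne : ∀ m, (X m).Nonempty) (hopen : ∀ m, IsOpen (X m))
    (hdisj : Disjoint (X true) (X false))
    (hfrontier : ∀ m, (X true ∪ X false)ᶜ = frontier (X m))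
    (hprec : ∀ m, (∀ j ∈ J, j • X m = X m) ∧
      ∀ g ∈ G m, g ∉ J → (g • X m) ∩ X m = ∅) :
    (∀ m, ∀ g : Γ, NFLetter G J m g → g • X m ⊆ X (!m)) ∧
      IsInteractivePair G J X := by
  have letter_maps_across : ∀ m, ∀ g : Γ, NFLetter G J m g → g • X m ⊆ X (!m) := by
    rintro m g ⟨hgG, hgJ⟩
    refine ((hopen m).smul g).subset_of_disjoint_of_compl_union_subset_closure
      (Set.disjoint_iff_inter_eq_empty.2 ((hprec m).2 g hgG hgJ)) ?_
    rw [Bool.union_apply_not, hfrontier m]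
    exact frontier_subset_closure
  exact ⟨letter_maps_across, hne, hdisj, fun m => (hprec m).1, letter_maps_across⟩

theorem stmt5 {Γ : Type*} [Group Γ] {Z : Type*} [TopologicalSpace Z] [MulAction Γ Z]
    [ContinuousConstSMul Γ Z]
    (G : Bool → Subgroup Γ) (J : Subgroup Γ) (hJ : ∀ m, J ≤ G m)
    (X : Bool → Set Z)
    (hne : ∀ m, (X m).Nonempty) (hopen : ∀ m, IsOpen (X m))
    (hdisj : Disjoint (X true) (X false))
    (hfrontier : ∀ m, (X true ∪ X false)ᶜ = frontier (X m))
    (hprec : ∀ m, (∀ j ∈ J, j • X m = X m) ∧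
      ∀ g ∈ G m, g ∉ J → (g • X m) ∩ X m = ∅) :
    (∀ m, ∀ g : Γ, NFLetter G J m g → g • X m ⊆ X (!m)) ∧
      IsInteractivePair G J X :=
  stmt5_general G J X hne hopen hdisj hfrontier hprec
end

section
/- Let Γ be a group acting on a set Z, G₁ and G₂ subgroups of Γ, and J a subgroup of G₁ ∩ G₂. Let B₁, B₂ ⊆ Z satisfy j • B_m = B_m for every j ∈ J and g • B_m ⊆ B_{3−m} for every g ∈ G_m∖J (m ∈ {1,2}). For each n ≥ 1 define T_n ⊆ Z as the union of all sets (γ_n⋯γ_1) • B₁ where γ_n, …, γ_1 is a normal form of length n with γ_1 ∈ G₁∖J, together with all sets (γ_n⋯γ_1) • B₂ where γ_n, …, γ_1 is a normal form of length n with γ_1 ∈ G₂∖J. Then the sequence {T_n} is decreasing with respect to inclusion: T_n ⊆ T_{n−1} for every n ≥ 2. -/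
open Pointwise

/-- `Tset G J B n` is the union of all sets `(γ_n ⋯ γ_1) • B k` over normal forms
`γ_n, …, γ_1` of length `n` whose first letter `γ_1` lies in `G k ∖ J`, for `k ∈ {1,2}`. -/
def Tset {Γ : Type*} [Group Γ] {Z : Type*} [MulAction Γ Z]
    (G : Bool → Subgroup Γ) (J : Subgroup Γ) (B : Bool → Set Z) (n : ℕ) : Set Z :=
  ⋃ (k : Bool) (w : List Γ)
    (_ : IsNormalForm G J w ∧ w.length = n ∧
      ∃ h : w ≠ [], NFLetter G J k (w.getLast h)),
    w.prod • B k

/-! Removing the first letter `γ_1 ∈ G k ∖ J` of a normal form of length `n` leaves a normal form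
of length `n - 1` whose first letter lies in the other factor, and `γ_1 • B k ⊆ B (!k)`; so each
set making up `T_n` sits inside one making up `T_{n-1}`. -/

namespace IsNormalForm

variable {Γ : Type*} [Group Γ] {G : Bool → Subgroup Γ} {J : Subgroup Γ} {w : List Γ}

theorem dropLast (hw : IsNormalForm G J w) (hne : w.dropLast ≠ []) :
    IsNormalForm G J w.dropLast :=
  ⟨hne, fun x hx => hw.2.1 x (List.dropLast_subset w hx), List.IsChain.dropLast hw.2.2⟩

theorem nfLetter_getLast_dropLast (hw : IsNormalForm G J w) (hne : w.dropLast ≠ []) {k : Bool}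
    (hk : NFLetter G J k (w.getLast hw.1)) :
    NFLetter G J (!k) (w.dropLast.getLast hne) :=
  List.IsChain.rel_getLast_dropLast hw.2.2 hne k hk

end IsNormalForm

theorem prod_smul_subset_prod_dropLast_smul {Γ : Type*} [Group Γ] {Z : Type*} [MulAction Γ Z]
    {A A' : Set Z} {w : List Γ} (hw : w ≠ []) (h : w.getLast hw • A ⊆ A') :
    w.prod • A ⊆ w.dropLast.prod • A' := by
  conv_lhs => rw [← List.dropLast_append_getLast hw, List.prod_append, List.prod_singleton,
    mul_smul]
  exact Set.smul_set_mono h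

theorem prod_smul_subset_Tset {Γ : Type*} [Group Γ] {Z : Type*} [MulAction Γ Z]
    {G : Bool → Subgroup Γ} {J : Subgroup Γ} (B : Bool → Set Z) {w : List Γ} {k : Bool}
    (hw : IsNormalForm G J w) (hk : NFLetter G J k (w.getLast hw.1)) :
    w.prod • B k ⊆ Tset G J B w.length :=
  Set.subset_iUnion₂_of_subset k w <| Set.subset_iUnion_of_subset ⟨hw, rfl, hw.1, hk⟩ subset_rfl

theorem stmt7_general {Γ : Type*} [Group Γ] {Z : Type*} [MulAction Γ Z]
    (G : Bool → Subgroup Γ) (J : Subgroup Γ)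
    (B : Bool → Set Z)
    (hmap : ∀ m, ∀ g : Γ, NFLetter G J m g → g • B m ⊆ B (!m)) :
    ∀ n : ℕ, 2 ≤ n → Tset G J B n ⊆ Tset G J B (n - 1) := by
  intro n hn
  simp only [Tset, Set.iUnion_subset_iff]
  rintro k w ⟨hw, rfl, hne, hk⟩
  have hne' : w.dropLast ≠ [] := by
    rw [← List.length_pos_iff, List.length_dropLast]
    omega
  calc w.prod • B k ⊆ w.dropLast.prod • B (!k) :=
        prod_smul_subset_prod_dropLast_smul hne (hmap k _ hk)
    _ ⊆ Tset G J B w.dropLast.length :=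
        prod_smul_subset_Tset B (hw.dropLast hne') (hw.nfLetter_getLast_dropLast hne' hk)
    _ = Tset G J B (w.length - 1) := by rw [List.length_dropLast]

theorem stmt7 {Γ : Type*} [Group Γ] {Z : Type*} [MulAction Γ Z]
    (G : Bool → Subgroup Γ) (J : Subgroup Γ) (hJ : ∀ m, J ≤ G m)
    (B : Bool → Set Z)
    (hinv : ∀ m, ∀ j ∈ J, j • B m = B m)
    (hmap : ∀ m, ∀ g : Γ, NFLetter G J m g → g • B m ⊆ B (!m)) :
    ∀ n : ℕ, 2 ≤ n → Tset G J B n ⊆ Tset G J B (n - 1) :=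
  stmt7_general G J B hmap
end

section
/- Let Γ be a group acting on a set Z, G₁ and G₂ subgroups of Γ, and J a subgroup of G₁ ∩ G₂. Let B₁, B₂ ⊆ Z satisfy Z = B₁ ∪ B₂, and set S = B₁ ∩ B₂ and X_m = Z ∖ B_{3−m} for m ∈ {1,2}. Assume j • B_m = B_m for every j ∈ J, and for every g ∈ G_m∖J both g • B_m ⊆ B_{3−m} and g • X_m ⊆ X_{3−m}. Then S is precisely embedded: for every γ in the subgroup ⟨G₁, G₂⟩ generated by G₁ and G₂, either γ • S ∩ X₁ = ∅ or γ • S ∩ X₂ = ∅. -/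
/-
Every element of `G true ⊔ G false` outside `J` can be written as a reduced word
`g₁ ⋯ gₙ` whose consecutive letters alternate between `G m ∖ J` and `G (!m) ∖ J`:
multiplying a reduced word on the left by an element of a factor either prepends a
letter, merges it into a new first letter, or cancels the first letter into `J`,
which is absorbed by the next one. A letter of factor `m` maps `B m` into `B (!m)`,
so a reduced word with first letter in factor `m` maps `S ⊆ B true ∩ B false`
into `B (!m)`, which is disjoint from `X m = (B (!m))ᶜ`. Elements of `J` fix both
`B m`, hence map `S` into `B false`, disjoint from `X true`.
-/

open Pointwise

inductive HasReducedForm {Γ : Type*} [Group Γ] (G : Bool → Subgroup Γ) (J : Subgroup Γ) :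
    Bool → Γ → Prop
  | letter {m : Bool} {g : Γ} : NFLetter G J m g → HasReducedForm G J m g
  | cons {m : Bool} {g γ : Γ} : NFLetter G J m g → HasReducedForm G J (!m) γ →
      HasReducedForm G J m (g * γ)

section ReducedForm

variable {Γ : Type*} [Group Γ] {G : Bool → Subgroup Γ} {J : Subgroup Γ} {m : Bool}

theorem NFLetter.mul_of_mem_right (hJ : ∀ m, J ≤ G m) {g j : Γ} (hg : NFLetter G J m g)
    (hj : j ∈ J) : NFLetter G J m (g * j) :=
  ⟨(G m).mul_mem hg.1 (hJ m hj), fun h => hg.2 ((J.mul_mem_cancel_right hj).1 h)⟩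

theorem NFLetter.mul_of_mem_left (hJ : ∀ m, J ≤ G m) {g j : Γ} (hj : j ∈ J)
    (hg : NFLetter G J m g) : NFLetter G J m (j * g) :=
  ⟨(G m).mul_mem (hJ m hj) hg.1, fun h => hg.2 ((J.mul_mem_cancel_left hj).1 h)⟩

theorem NFLetter.mul_mem_or {g h : Γ} (hg : NFLetter G J m g) (hh : NFLetter G J m h) :
    g * h ∈ J ∨ NFLetter G J m (g * h) := by
  by_cases hgh : g * h ∈ J
  · exact .inl hgh
  · exact .inr ⟨(G m).mul_mem hg.1 hh.1, hgh⟩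

theorem HasReducedForm.mul_of_mem_left (hJ : ∀ m, J ≤ G m) {j γ : Γ} (hj : j ∈ J)
    (h : HasReducedForm G J m γ) : HasReducedForm G J m (j * γ) := by
  cases h with
  | letter hg => exact .letter (hg.mul_of_mem_left hJ hj)
  | cons hg hγ => rw [← mul_assoc]; exact .cons (hg.mul_of_mem_left hJ hj) hγ

theorem HasReducedForm.letter_mul (hJ : ∀ m, J ≤ G m) {g γ : Γ} (hg : NFLetter G J m g)
    (h : HasReducedForm G J m γ) :
    g * γ ∈ J ∨ HasReducedForm G J m (g * γ) ∨ HasReducedForm G J (!m) (g * γ) := by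
  cases h with
  | letter hg₁ =>
    rcases hg.mul_mem_or hg₁ with hJg | hg'
    · exact .inl hJg
    · exact .inr (.inl (.letter hg'))
  | cons hg₁ hγ =>
    rw [← mul_assoc]
    rcases hg.mul_mem_or hg₁ with hJg | hg'
    · exact .inr (.inr (hγ.mul_of_mem_left hJ hJg))
    · exact .inr (.inl (.cons hg' hγ))

theorem mul_mem_or_hasReducedForm (hJ : ∀ m, J ≤ G m) {g γ : Γ} (hg : g ∈ G m)
    (hγ : γ ∈ J ∨ ∃ k, HasReducedForm G J k γ) :
    g * γ ∈ J ∨ ∃ k, HasReducedForm G J k (g * γ) := by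
  by_cases hgJ : g ∈ J
  · rcases hγ with hγ | ⟨k, hγ⟩
    · exact .inl (J.mul_mem hgJ hγ)
    · exact .inr ⟨k, hγ.mul_of_mem_left hJ hgJ⟩
  have hg' : NFLetter G J m g := ⟨hg, hgJ⟩
  rcases hγ with hγ | ⟨k, hγ⟩
  · exact .inr ⟨m, .letter (hg'.mul_of_mem_right hJ hγ)⟩
  rcases Bool.eq_or_eq_not k m with rfl | rfl
  · rcases hγ.letter_mul hJ hg' with h | h | h
    · exact .inl h
    · exact .inr ⟨_, h⟩
    · exact .inr ⟨_, h⟩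
  · exact .inr ⟨m, .cons hg' hγ⟩

theorem mem_or_hasReducedForm_of_mem_sup (hJ : ∀ m, J ≤ G m) {γ : Γ}
    (hγ : γ ∈ G true ⊔ G false) : γ ∈ J ∨ ∃ k, HasReducedForm G J k γ := by
  rw [← (G true).closure_eq, ← (G false).closure_eq, ← Subgroup.closure_union] at hγ
  induction hγ using Subgroup.closure_induction_left with
  | one => exact .inl J.one_mem
  | mul_left x hx y _ ih =>
    rcases hx with hx | hx
    · exact mul_mem_or_hasReducedForm hJ hx ih
    · exact mul_mem_or_hasReducedForm hJ hx ih
  | inv_mul_cancel x hx y _ ih =>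
    rcases hx with hx | hx
    · exact mul_mem_or_hasReducedForm hJ ((G true).inv_mem hx) ih
    · exact mul_mem_or_hasReducedForm hJ ((G false).inv_mem hx) ih

theorem HasReducedForm.smul_subset {Z : Type*} [MulAction Γ Z] {B : Bool → Set Z}
    (hmapB : ∀ m, ∀ g : Γ, NFLetter G J m g → g • B m ⊆ B (!m)) {s : Set Z}
    (hs : ∀ k, s ⊆ B k) {γ : Γ} (h : HasReducedForm G J m γ) : γ • s ⊆ B (!m) := by
  induction h with
  | @letter m g hg => exact (Set.smul_set_mono (hs m)).trans (hmapB m g hg)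
  | @cons m g γ hg _ ih =>
    rw [Bool.not_not] at ih
    rw [mul_smul]
    exact (Set.smul_set_mono ih).trans (hmapB m g hg)

end ReducedForm

theorem stmt8_general {Γ : Type*} [Group Γ] {Z : Type*} [MulAction Γ Z]
    (G : Bool → Subgroup Γ) (J : Subgroup Γ) (hJ : ∀ m, J ≤ G m)
    (B : Bool → Set Z)
    (S : Set Z) (hS : S = B true ∩ B false)
    (X : Bool → Set Z) (hX : ∀ m, X m = (B (!m))ᶜ)
    (hinv : ∀ m, ∀ j ∈ J, j • B m = B m)
    (hmapB : ∀ m, ∀ g : Γ, NFLetter G J m g → g • B m ⊆ B (!m)) :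
    ∀ γ ∈ G true ⊔ G false, (γ • S) ∩ X true = ∅ ∨ (γ • S) ∩ X false = ∅ := by
  intro γ hγ
  have hSB : ∀ k, S ⊆ B k := by
    rintro (_ | _) <;> simp [hS]
  suffices ∃ m, γ • S ⊆ B (!m) by
    obtain ⟨m, hm⟩ := this
    have hdisj : γ • S ∩ X m = ∅ := by
      rw [hX, ← Set.disjoint_iff_inter_eq_empty, Set.disjoint_compl_right_iff_subset]
      exact hm
    cases m
    · exact .inr hdisj
    · exact .inl hdisj
  rcases mem_or_hasReducedForm_of_mem_sup hJ hγ with hγJ | ⟨m, hm⟩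
  · exact ⟨true, (Set.smul_set_mono (hSB false)).trans (hinv false γ hγJ).le⟩
  · exact ⟨m, hm.smul_subset hmapB hSB⟩

theorem stmt8 {Γ : Type*} [Group Γ] {Z : Type*} [MulAction Γ Z]
    (G : Bool → Subgroup Γ) (J : Subgroup Γ) (hJ : ∀ m, J ≤ G m)
    (B : Bool → Set Z) (hcover : B true ∪ B false = Set.univ)
    (S : Set Z) (hS : S = B true ∩ B false)
    (X : Bool → Set Z) (hX : ∀ m, X m = (B (!m))ᶜ)
    (hinv : ∀ m, ∀ j ∈ J, j • B m = B m)
    (hmapB : ∀ m, ∀ g : Γ, NFLetter G J m g → g • B m ⊆ B (!m))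
    (hmapX : ∀ m, ∀ g : Γ, NFLetter G J m g → g • X m ⊆ X (!m)) :
    ∀ γ ∈ G true ⊔ G false, (γ • S) ∩ X true = ∅ ∨ (γ • S) ∩ X false = ∅ :=
  stmt8_general G J hJ B S hS X hX hinv hmapB
end

section
/- Let Γ be a group acting on a set Z, G₁ and G₂ subgroups of Γ, and J a subgroup of G₁ ∩ G₂. Suppose (X₁, X₂) is a proper interactive pair for (G₁, G₂, J). Then for any k ∈ {1,2}, the value g = γ_n⋯γ_1 of any (3−k, k)-form (i.e. a normal form whose first letter γ_1 lies in G_k∖J and whose last letter γ_n lies in G_{3−k}∖J) has infinite order as an element of Γ. -/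
open Pointwise

/-! Ping-pong. Reading a normal form from its first letter, assign to each letter the factor
forced by its successor; then `w.prod` maps `X k` into `X k` when the assignment makes the head a
letter of `G (!k)` (the even case). A nontrivial power of such a word is again such a word, and
its value cannot be `1`: splitting off a letter `g ∈ G (!m₀)` at one end, the rest maps `X m₀`
into `X (!m₀)`, so the proper point would lie in `g • X (!m₀)`. In the odd case the head is also
a letter of the other factor; if the first letter `B` is not, conjugating by `B` merges it into
the head and gives an even word, and if it is, then so is every letter, and the doubled word
`w ++ w` is even. -/

section PingPong

variable {Γ : Type*} [Group Γ] {Z : Type*} [MulAction Γ Z]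
  {G : Bool → Subgroup Γ} {J : Subgroup Γ} {X : Bool → Set Z}

theorem mul_ne_one_of_notMem_smul {g h : Γ} {x : Z} {A B : Set Z} (hx : x ∈ A)
    (hxB : x ∉ g • B) (hh : h • A ⊆ B) : g * h ≠ 1 := by
  intro hgh
  apply hxB
  have : g • h • x = x := by rw [← mul_smul, hgh, one_smul]
  exact this ▸ Set.smul_mem_smul_set (hh (Set.smul_mem_smul_set hx))

/-- `AltWord G J s t w`: read from its last entry to its head, `w` starts with a letter of
factor `s`, alternates between the factors, and ends with a letter of factor `!t`, so that for an
interactive pair `w.prod` maps `X s` into `X t`. Since a letter may lie in both factors, this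
records a choice of factor for each letter. -/
inductive AltWord (G : Bool → Subgroup Γ) (J : Subgroup Γ) (s : Bool) : Bool → List Γ → Prop
  | nil : AltWord G J s s []
  | cons {t : Bool} {a : Γ} {l : List Γ} :
      NFLetter G J t a → AltWord G J s t l → AltWord G J s (!t) (a :: l)

namespace AltWord

theorem append {s r t : Bool} {u v : List Γ} (hv : AltWord G J s r v) (hu : AltWord G J r t u) :
    AltWord G J s t (u ++ v) := by
  induction hu with
  | nil => exact hv
  | cons ha _ ih => exact cons ha ih

theorem of_cons {s t : Bool} {a : Γ} {l : List Γ} (h : AltWord G J s t (a :: l)) :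
    ∃ r, t = !r ∧ NFLetter G J r a ∧ AltWord G J s r l := by
  rcases h with _ | ⟨ha, hl⟩
  exact ⟨_, rfl, ha, hl⟩

theorem of_append {s t : Bool} {v : List Γ} :
    ∀ {u : List Γ}, AltWord G J s t (u ++ v) → ∃ r, AltWord G J s r v ∧ AltWord G J r t u
  | [], h => ⟨t, h, nil⟩
  | a :: u, h => by
    obtain ⟨r', rfl, ha, h'⟩ := of_cons h
    obtain ⟨r, hv, hu⟩ := of_append h'
    exact ⟨r, hv, cons ha hu⟩

theorem of_concat {s t : Bool} {u : List Γ} {b : Γ} (h : AltWord G J s t (u ++ [b])) :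
    NFLetter G J s b ∧ AltWord G J (!s) t u := by
  obtain ⟨r, hb, hu⟩ := of_append h
  obtain ⟨r', rfl, hb, hnil⟩ := of_cons hb
  cases hnil
  exact ⟨hb, hu⟩

theorem swap {s t : Bool} {w : List Γ} (hw : ∀ a ∈ w, ∀ m, NFLetter G J m a)
    (h : AltWord G J s t w) : AltWord G J (!s) (!t) w := by
  induction h with
  | nil => exact nil
  | @cons t a l _ _ ih =>
    exact cons (hw a List.mem_cons_self _) (ih fun b hb => hw b (List.mem_cons_of_mem a hb))

theorem smul_subset (hX : IsInteractivePair G J X) {s t : Bool} {w : List Γ}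
    (h : AltWord G J s t w) : w.prod • X s ⊆ X t := by
  induction h with
  | nil => simp
  | cons ha _ ih =>
    rw [List.prod_cons, mul_smul]
    exact (Set.smul_set_mono ih).trans (hX.2.2.2 _ _ ha)

theorem exists_pow_succ {s : Bool} {w : List Γ} (h : AltWord G J s s w) (hw : w ≠ []) (n : ℕ) :
    ∃ u ≠ [], AltWord G J s s u ∧ u.prod = w.prod ^ (n + 1) := by
  induction n with
  | zero => exact ⟨w, hw, h, (pow_one _).symm⟩
  | succ n ih =>
    obtain ⟨u, -, hu, hprod⟩ := ih
    refine ⟨w ++ u, by simp [hw], hu.append h, ?_⟩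
    rw [List.prod_append, hprod, ← pow_succ']

/-- Peel off the letter that lies in the factor `!m₀` opposite to the proper point: the head
if `s = m₀`, the first letter applied otherwise. -/
theorem prod_ne_one (hX : IsProperInteractivePair G J X) {s : Bool} {w : List Γ}
    (h : AltWord G J s s w) (hw : w ≠ []) : w.prod ≠ 1 := by
  obtain ⟨hpair, m₀, x, hx, hprop⟩ := hX
  by_cases hs : s = m₀
  · subst hs
    obtain ⟨c, V, rfl⟩ := List.exists_cons_of_ne_nil hw
    obtain ⟨r, hr, hc, hV⟩ := of_cons h
    obtain rfl : r = !s := by simp [hr]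
    rw [List.prod_cons]
    exact mul_ne_one_of_notMem_smul hx (hprop c hc.1) (hV.smul_subset hpair)
  · obtain rfl : s = !m₀ := Bool.eq_not_iff.mpr hs
    obtain ⟨D, b, rfl⟩ := (List.eq_nil_or_concat' w).resolve_left hw
    obtain ⟨hb, hD⟩ := of_concat h
    rw [Bool.not_not] at hD
    rw [List.prod_append, List.prod_singleton, ne_eq, mul_eq_one_comm]
    exact mul_ne_one_of_notMem_smul hx (hprop b hb.1) (hD.smul_subset hpair)

theorem not_isOfFinOrder (hX : IsProperInteractivePair G J X) {s : Bool} {w : List Γ}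
    (h : AltWord G J s s w) (hw : w ≠ []) : ¬ IsOfFinOrder w.prod := by
  rw [isOfFinOrder_iff_pow_eq_one]
  rintro ⟨n, hn, hpow⟩
  obtain ⟨u, hu, halt, hprod⟩ := h.exists_pow_succ hw (n - 1)
  rw [Nat.sub_add_cancel hn, hpow] at hprod
  exact halt.prod_ne_one hX hu hprod

theorem not_isOfFinOrder_of_forall_nfLetter (hX : IsProperInteractivePair G J X) {s : Bool}
    {w : List Γ} (h : AltWord G J s (!s) w) (hw : w ≠ [])
    (hall : ∀ a ∈ w, ∀ m, NFLetter G J m a) : ¬ IsOfFinOrder w.prod := by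
  have hww : AltWord G J s s (w ++ w) := by simpa using h.append (h.swap hall)
  intro hfin
  refine hww.not_isOfFinOrder hX (by simp [hw]) ?_
  rw [List.prod_append, ← sq]
  exact hfin.pow

/-- An odd word whose head also lies in the other factor is conjugate, by its first letter `B`,
to the even word obtained by merging `B` into the head. -/
theorem not_isOfFinOrder_of_not_nfLetter_getLast (hJ : ∀ m, J ≤ G m)
    (hX : IsProperInteractivePair G J X) {k : Bool} {w : List Γ} (h : AltWord G J k (!k) w)
    (hw : w ≠ []) (hhead : NFLetter G J (!k) (w.head hw))
    (hlast : ¬ NFLetter G J (!k) (w.getLast hw)) : ¬ IsOfFinOrder w.prod := by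
  obtain ⟨c, rest, rfl⟩ := List.exists_cons_of_ne_nil hw
  obtain ⟨r, hr, hc, hrest⟩ := of_cons h
  obtain rfl : k = r := by simpa using hr
  obtain ⟨M, B, rfl⟩ :=
    (List.eq_nil_or_concat' rest).resolve_left (by rintro rfl; exact hlast hhead)
  obtain ⟨hB, hM⟩ := of_concat hrest
  simp only [List.head_cons] at hhead
  rw [List.getLast_cons (by simp), List.getLast_concat] at hlast
  have hBc : B * c ∉ J := fun hBc =>
    hlast ⟨by simpa using mul_mem (hJ _ hBc) (inv_mem hhead.1), hB.2⟩
  have hmerge : AltWord G J (!k) (!k) ((B * c) :: M) := cons ⟨mul_mem hB.1 hc.1, hBc⟩ hM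
  have hconj : IsConj (c :: (M ++ [B])).prod ((B * c) :: M).prod := by
    refine isConj_iff.mpr ⟨B, ?_⟩
    simp only [List.prod_cons, List.prod_append, List.prod_nil]
    group
  exact fun hfin => hmerge.not_isOfFinOrder hX (List.cons_ne_nil _ _) (hconj.isOfFinOrder hfin)

end AltWord

theorem exists_altWord_of_isChain {k : Bool} :
    ∀ {w : List Γ} (hw : w ≠ []),
      w.IsChain (fun a b => ∀ m, NFLetter G J m b → NFLetter G J (!m) a) →
      NFLetter G J k (w.getLast hw) → ∃ t, AltWord G J k t w
  | [a], _, _, ha => ⟨_, .cons ha .nil⟩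
  | a :: b :: l, _, hchain, hlast => by
    obtain ⟨hab, hchain⟩ := List.isChain_cons_cons.mp hchain
    obtain ⟨t, hbl⟩ := exists_altWord_of_isChain (List.cons_ne_nil b l) hchain hlast
    obtain ⟨r, rfl, hb, -⟩ := hbl.of_cons
    exact ⟨_, .cons (hab r hb) hbl⟩

end PingPong

theorem stmt11 {Γ : Type*} [Group Γ] {Z : Type*} [MulAction Γ Z]
    (G : Bool → Subgroup Γ) (J : Subgroup Γ) (hJ : ∀ m, J ≤ G m)
    (X : Bool → Set Z) (hX : IsProperInteractivePair G J X) :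
    ∀ (k : Bool) (w : List Γ), IsMKForm G J (!k) k w →
      ¬ IsOfFinOrder w.prod := by
  rintro k w ⟨⟨hw, -, hchain⟩, _, hhead, hlast⟩
  obtain ⟨t, halt⟩ := exists_altWord_of_isChain hw hchain hlast
  by_cases htk : t = k
  · subst htk
    exact halt.not_isOfFinOrder hX hw
  obtain rfl : t = !k := Bool.eq_not_iff.mpr htk
  by_cases hamb : NFLetter G J (!k) (w.getLast hw)
  · refine halt.not_isOfFinOrder_of_forall_nfLetter hX hw ?_
    refine hchain.backwards_induction _ _ (fun a b hab hb m => by simpa using hab (!m) (hb (!m)))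
      fun _ m => ?_
    cases k <;> cases m <;> assumption
  · exact halt.not_isOfFinOrder_of_not_nfLetter_getLast hJ hX hw hhead hamb
end

section
/- In PSL(2,ℂ) (the quotient of SL(2,ℂ) by its center {±I}), let J be the subgroup generated by the images of the integer matrices [[1,1],[0,1]] and [[0,1],[−1,0]], let g₁ be the image of the diagonal matrix diag(i, −i), let g₂ be the image of the matrix [[0,i],[i,0]], and set G₁ = ⟨J, g₁⟩ and G₂ = ⟨J, g₂⟩. Then: (a) g₁ ∉ J and g₂ ∉ J; (b) (g₁g₂)² = 1 in PSL(2,ℂ), so the sequence g₁, g₂, g₁, g₂ is a normal form for (G₁, G₂, J) whose value is the identity; and consequently (c) the canonical homomorphism from the amalgamated free product G₁ *_J G₂ to PSL(2,ℂ) induced by the inclusions of G₁ and G₂ is not injective, i.e. ⟨G₁, G₂⟩ is not isomorphic to G₁ *_J G₂ via this map. -/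
open Matrix
open scoped MatrixGroups

/-- The image in `PSL(2, ℂ)` of the matrix `[[1,1],[0,1]]`. -/
noncomputable def pslT : PSL(2, ℂ) :=
  QuotientGroup.mk (⟨!![1, 1; 0, 1], by norm_num [Matrix.det_fin_two_of]⟩ : SL(2, ℂ))

/-- The image in `PSL(2, ℂ)` of the matrix `[[0,1],[-1,0]]`. -/
noncomputable def pslS : PSL(2, ℂ) :=
  QuotientGroup.mk (⟨!![0, 1; -1, 0], by norm_num [Matrix.det_fin_two_of]⟩ : SL(2, ℂ))

/-- The subgroup `J` of `PSL(2, ℂ)` generated by the images of `[[1,1],[0,1]]`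
and `[[0,1],[-1,0]]`. -/
noncomputable def exJ : Subgroup PSL(2, ℂ) := Subgroup.closure {pslT, pslS}

/-- The image `g₁` in `PSL(2, ℂ)` of the matrix `diag(i, -i)`. -/
noncomputable def exg₁ : PSL(2, ℂ) :=
  QuotientGroup.mk (⟨!![Complex.I, 0; 0, -Complex.I],
    by norm_num [Matrix.det_fin_two_of, Complex.I_mul_I]⟩ : SL(2, ℂ))

/-- The image `g₂` in `PSL(2, ℂ)` of the matrix `[[0, i],[i, 0]]`. -/
noncomputable def exg₂ : PSL(2, ℂ) :=
  QuotientGroup.mk (⟨!![0, Complex.I; Complex.I, 0],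
    by norm_num [Matrix.det_fin_two_of, Complex.I_mul_I]⟩ : SL(2, ℂ))

/-- The family `m ↦ G_m` with `G₁ = ⟨J, g₁⟩` and `G₂ = ⟨J, g₂⟩`. -/
noncomputable def exG : Bool → Subgroup PSL(2, ℂ) := fun m =>
  if m then exJ ⊔ Subgroup.closure {exg₁} else exJ ⊔ Subgroup.closure {exg₂}

theorem exJ_le_exG : ∀ m, exJ ≤ exG m := by
  intro m; cases m <;> exact le_sup_left


/-!
Every element of `J` is the image of an integer matrix, so a representative `B ∈ SL(2, ℂ)`
of it equals `±A` with `A` integral and every entry of `B` squares to the square of an integer.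
The representatives of `g₁` and `g₂` have `i` as an entry, hence `g₁, g₂ ∉ J`. Moreover
`g₁ g₂` is the image of `[[0,-1],[1,0]]`, whose square is `-I`, so `(g₁ g₂)² = 1`. Since
`g₂ = g₁ S` with `S ∈ J`, both `g₁` and `g₂` lie in `G₁ = G₂`, which gives the normal form.
By the normal form theorem for amalgamated products, the reduced word `g₁ g₂ g₁ g₂` is
nontrivial in `G₁ *_J G₂`, yet it maps to `1`.
-/

namespace Monoid.PushoutI

variable {ι H : Type*} {G : ι → Type*} [∀ i, Group (G i)] [Group H] {φ : ∀ i, H →* G i}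

theorem of_mul_of_sq_ne_one (hφ : ∀ i, Function.Injective (φ i)) {i j : ι} (hij : i ≠ j)
    {a : G i} {b : G j} (ha : a ∉ (φ i).range) (hb : b ∉ (φ j).range) :
    (of (φ := φ) i a * of j b) ^ 2 ≠ 1 := by
  have ha1 : a ≠ 1 := fun h => ha ⟨1, by rw [map_one, h]⟩
  have hb1 : b ≠ 1 := fun h => hb ⟨1, by rw [map_one, h]⟩
  let w : CoprodI.Word G :=
    ⟨[⟨i, a⟩, ⟨j, b⟩, ⟨i, a⟩, ⟨j, b⟩], by simp [ha1, hb1], by simp [hij, hij.symm]⟩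
  have hw : Reduced φ w := by
    simp only [Reduced, w, List.mem_cons, List.not_mem_nil, or_false]
    rintro g (rfl | rfl | rfl | rfl) <;> assumption
  have hw_prod : ofCoprodI w.prod = (of (φ := φ) i a * of j b) ^ 2 := by
    simp [w, CoprodI.Word.prod, sq, mul_assoc]
  intro h
  have hw_empty := hw.eq_empty_of_mem_range hφ (by rw [hw_prod, h]; exact one_mem _)
  simp [w, CoprodI.Word.empty] at hw_empty

end Monoid.PushoutI

section AmalgamatedProduct

variable {Γ : Type*} [Group Γ] {G : Bool → Subgroup Γ} {J : Subgroup Γ}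

theorem isNormalForm_of_forall_mem {w : List Γ} (hw : w ≠ [])
    (h : ∀ x ∈ w, ∀ m, NFLetter G J m x) : IsNormalForm G J w :=
  ⟨hw, fun x hx => Or.inl (h x hx true),
    ((List.isChain_iff_getElem (R := fun _ _ => True)).mpr fun _ _ => trivial).imp_of_mem_imp
      fun a _ ha _ _ m _ => h a ha !m⟩

theorem not_injective_amalgHom_of_sq_eq_one (hJ : ∀ m, J ≤ G m) {g₁ g₂ : Γ}
    (h₁ : NFLetter G J true g₁) (h₂ : NFLetter G J false g₂) (h : (g₁ * g₂) ^ 2 = 1) :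
    ¬ Function.Injective (amalgHom G J hJ) := by
  have not_mem_range {m : Bool} {g : Γ} (hg : NFLetter G J m g) :
      (⟨g, hg.1⟩ : G m) ∉ (Subgroup.inclusion (hJ m)).range := by
    rw [Subgroup.inclusion_range, Subgroup.mem_subgroupOf]
    exact hg.2
  intro hinj
  refine Monoid.PushoutI.of_mul_of_sq_ne_one (fun m => Subgroup.inclusion_injective (hJ m))
    (by decide) (not_mem_range h₁) (not_mem_range h₂) (hinj ?_)
  simpa [amalgHom, Monoid.PushoutI.lift_of] using h

end AmalgamatedProduct

noncomputable def sl2IntToPSL2 : SL(2, ℤ) →* PSL(2, ℂ) :=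
  (QuotientGroup.mk' (Subgroup.center SL(2, ℂ))).comp
    (Matrix.SpecialLinearGroup.map (Int.castRingHom ℂ))

theorem exists_int_sq_eq_sq_of_mk_mem_range {B : SL(2, ℂ)}
    (hB : (B : PSL(2, ℂ)) ∈ sl2IntToPSL2.range) (i j : Fin 2) :
    ∃ k : ℤ, (B : Matrix (Fin 2) (Fin 2) ℂ) i j ^ 2 = (k : ℂ) ^ 2 := by
  obtain ⟨A, hA⟩ := hB
  rw [sl2IntToPSL2, MonoidHom.comp_apply, QuotientGroup.mk'_apply, QuotientGroup.eq,
    Matrix.SpecialLinearGroup.mem_center_iff] at hA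
  obtain ⟨r, hr, hAB⟩ := hA
  set A' := Matrix.SpecialLinearGroup.map (Int.castRingHom ℂ) A
  have hB_eq : (B : Matrix (Fin 2) (Fin 2) ℂ) = A' * Matrix.scalar (Fin 2) r := by
    rw [hAB, Matrix.SpecialLinearGroup.coe_mul, ← Matrix.mul_assoc,
      ← Matrix.SpecialLinearGroup.coe_mul, mul_inv_cancel, Matrix.SpecialLinearGroup.coe_one,
      Matrix.one_mul]
  refine ⟨(A : Matrix (Fin 2) (Fin 2) ℤ) i j, ?_⟩
  rw [Fintype.card_fin] at hr
  simp [hB_eq, A', mul_pow, hr]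

theorem mk_notMem_range_of_entry_eq_I {B : SL(2, ℂ)} {i j : Fin 2}
    (hij : (B : Matrix (Fin 2) (Fin 2) ℂ) i j = Complex.I) :
    (B : PSL(2, ℂ)) ∉ sl2IntToPSL2.range := by
  intro hB
  obtain ⟨k, hk⟩ := exists_int_sq_eq_sq_of_mk_mem_range hB i j
  rw [hij, Complex.I_sq] at hk
  have hk' : -1 = k ^ 2 := by exact_mod_cast hk
  nlinarith [sq_nonneg k]

theorem sl2IntToPSL2_T : sl2IntToPSL2 ModularGroup.T = pslT := by
  refine congrArg QuotientGroup.mk (Subtype.ext ?_)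
  ext i j
  fin_cases i <;> fin_cases j <;> simp [ModularGroup.coe_T]

theorem sl2IntToPSL2_S_inv : sl2IntToPSL2 ModularGroup.S⁻¹ = pslS := by
  refine congrArg QuotientGroup.mk (Subtype.ext ?_)
  ext i j
  fin_cases i <;> fin_cases j <;>
    simp [ModularGroup.coe_S, Matrix.SpecialLinearGroup.coe_inv, Matrix.adjugate_fin_two]

theorem exJ_le_range : exJ ≤ sl2IntToPSL2.range := by
  rw [exJ, Subgroup.closure_le, Set.insert_subset_iff, Set.singleton_subset_iff]
  exact ⟨⟨_, sl2IntToPSL2_T⟩, ⟨_, sl2IntToPSL2_S_inv⟩⟩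

theorem exg₁_notMem_exJ : exg₁ ∉ exJ := fun h =>
  mk_notMem_range_of_entry_eq_I (i := 0) (j := 0) rfl (exJ_le_range h)

theorem exg₂_notMem_exJ : exg₂ ∉ exJ := fun h =>
  mk_notMem_range_of_entry_eq_I (i := 0) (j := 1) rfl (exJ_le_range h)

-- `exg₁`, `exg₂` and `pslS` are by definition the images of `slg₁`, `slg₂` and `slS`.
noncomputable def slg₁ : SL(2, ℂ) :=
  ⟨!![Complex.I, 0; 0, -Complex.I], by norm_num [Matrix.det_fin_two_of, Complex.I_mul_I]⟩

noncomputable def slg₂ : SL(2, ℂ) :=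
  ⟨!![0, Complex.I; Complex.I, 0], by norm_num [Matrix.det_fin_two_of, Complex.I_mul_I]⟩

noncomputable def slS : SL(2, ℂ) :=
  ⟨!![0, 1; -1, 0], by norm_num [Matrix.det_fin_two_of]⟩

theorem slg₁_mul_slS : slg₁ * slS = slg₂ := by
  ext i j
  rw [Matrix.SpecialLinearGroup.coe_mul]
  fin_cases i <;> fin_cases j <;> simp [slg₁, slg₂, slS, Matrix.mul_apply]

theorem slg₁_mul_slg₂_sq : (slg₁ * slg₂) ^ 2 = -1 := by
  ext i j
  rw [sq, Matrix.SpecialLinearGroup.coe_mul, Matrix.SpecialLinearGroup.coe_mul]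
  fin_cases i <;> fin_cases j <;> simp [slg₁, slg₂, Matrix.mul_apply]

theorem exg₂_eq_exg₁_mul_pslS : exg₂ = exg₁ * pslS :=
  congrArg QuotientGroup.mk slg₁_mul_slS.symm

theorem exg₁_mul_exg₂_sq : (exg₁ * exg₂) ^ 2 = 1 := by
  change ((slg₁ * slg₂) ^ 2 : SL(2, ℂ)) = (1 : PSL(2, ℂ))
  rw [slg₁_mul_slg₂_sq, QuotientGroup.eq_one_iff]
  exact Subgroup.mem_center_iff.mpr fun g => by simp

theorem pslS_mem_exJ : pslS ∈ exJ := Subgroup.subset_closure (by simp)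

theorem exg₁_mem_exG_true : exg₁ ∈ exG true :=
  Subgroup.mem_sup_right (Subgroup.mem_closure_singleton_self _)

theorem exg₂_mem_exG_false : exg₂ ∈ exG false :=
  Subgroup.mem_sup_right (Subgroup.mem_closure_singleton_self _)

theorem exg₁_mem_exG_iff_exg₂_mem (m : Bool) : exg₁ ∈ exG m ↔ exg₂ ∈ exG m := by
  rw [exg₂_eq_exg₁_mul_pslS, Subgroup.mul_mem_cancel_right _ (exJ_le_exG m pslS_mem_exJ)]

theorem nfLetter_exg₁ : ∀ m, NFLetter exG exJ m exg₁
  | true => ⟨exg₁_mem_exG_true, exg₁_notMem_exJ⟩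
  | false => ⟨(exg₁_mem_exG_iff_exg₂_mem false).mpr exg₂_mem_exG_false, exg₁_notMem_exJ⟩

theorem nfLetter_exg₂ : ∀ m, NFLetter exG exJ m exg₂
  | true => ⟨(exg₁_mem_exG_iff_exg₂_mem true).mp exg₁_mem_exG_true, exg₂_notMem_exJ⟩
  | false => ⟨exg₂_mem_exG_false, exg₂_notMem_exJ⟩

theorem stmt13 :
    (exg₁ ∉ exJ ∧ exg₂ ∉ exJ) ∧
    ((exg₁ * exg₂) ^ 2 = 1 ∧
      IsNormalForm exG exJ [exg₁, exg₂, exg₁, exg₂] ∧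
      ([exg₁, exg₂, exg₁, exg₂] : List PSL(2, ℂ)).prod = 1) ∧
    ¬ Function.Injective (amalgHom exG exJ exJ_le_exG) := by
  have hsq := exg₁_mul_exg₂_sq
  refine ⟨⟨exg₁_notMem_exJ, exg₂_notMem_exJ⟩, ⟨hsq, ?_, by simpa [sq, mul_assoc] using hsq⟩,
    not_injective_amalgHom_of_sq_eq_one exJ_le_exG (nfLetter_exg₁ true) (nfLetter_exg₂ false) hsq⟩
  refine isNormalForm_of_forall_mem (List.cons_ne_nil _ _) ?_
  simp only [List.mem_cons, List.not_mem_nil, or_false]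
  rintro x (rfl | rfl | rfl | rfl)
  exacts [nfLetter_exg₁, nfLetter_exg₂, nfLetter_exg₁, nfLetter_exg₂]
end
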